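/- arXiv:2604.23504 — 3 statements merged into one kernel-verified Lean document; each statement's English description precedes it below -/
import Mathlib

section
/- Let ρ be a d×d density matrix with spectral decomposition ρ=Σ_k p_k|ψ_k⟩⟨ψ_k|, let {|i⟩}_{i=1}^d be an orthonormal basis, and set E_{ij}=|i⟩⟨j|. For any symmetric function c̃ on pairs of eigenvalues with c̃(x,x)=x, define I(A)= (1/2)Tr[ρ(A†A+AA†)] − Σ_{k,l} c̃(p_k,p_l)·Tr[A†|ψ_k⟩⟨ψ_k|A|ψ_l⟩⟨ψ_l|]. Then Σ_{i,j=1}^d I(E_{ij}) = d − Σ_{k,l} c̃(p_k,p_l). -/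
open Matrix

lemma vmv_mul' {d : ℕ} (a b c e : Fin d → ℂ) :
    vecMulVec a b * vecMulVec c e = (b ⬝ᵥ c) • vecMulVec a e := by
  ext m n
  simp [Matrix.mul_apply, vecMulVec_apply, dotProduct, Finset.sum_mul]
  exact Finset.sum_congr rfl fun x _ => by ring

lemma vmv_trace' {d : ℕ} (a b : Fin d → ℂ) :
    Matrix.trace (vecMulVec a b) = b ⬝ᵥ a := by
  simp [Matrix.trace, Matrix.diag, vecMulVec_apply, dotProduct, mul_comm]

lemma vmv_conjT' {d : ℕ} (a b : Fin d → ℂ) :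
    (vecMulVec a (star b))ᴴ = vecMulVec b (star a) := by
  ext m n
  simp [vecMulVec_apply, conjTranspose_apply, mul_comm]

lemma complete' {d : ℕ} (w : Fin d → Fin d → ℂ)
    (hw : ∀ i j, star (w i) ⬝ᵥ w j = if i = j then 1 else 0) :
    ∀ m n, (∑ i, star (w i m) * w i n) = if m = n then 1 else 0 := by
  set U : Matrix (Fin d) (Fin d) ℂ := Matrix.of w with hU
  have h1 : U * Uᴴ = 1 := by
    ext i j
    have := hw j i
    simp only [dotProduct, Pi.star_apply] at this
    simp only [Matrix.mul_apply, conjTranspose_apply, hU, Matrix.of_apply, Matrix.one_apply]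
    calc ∑ m, w i m * star (w j m) = ∑ m, star (w j m) * w i m := by
          exact Finset.sum_congr rfl fun x _ => mul_comm _ _
      _ = if i = j then 1 else 0 := by rw [this]; by_cases h : i = j <;> simp [h, eq_comm]
  have h2 : Uᴴ * U = 1 := mul_eq_one_comm.mp h1
  intro m n
  have := congrFun (congrFun h2 m) n
  simpa only [Matrix.mul_apply, conjTranspose_apply, hU, Matrix.of_apply,
    Matrix.one_apply] using this

lemma fsum' {d : ℕ} (w : Fin d → Fin d → ℂ) (u : Fin d → ℂ)
    (hw : ∀ i j, star (w i) ⬝ᵥ w j = if i = j then 1 else 0)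
    (hu : star u ⬝ᵥ u = 1) :
    ∑ i, (star (w i) ⬝ᵥ u) * (star u ⬝ᵥ w i) = 1 := by
  have step : ∀ i, (star (w i) ⬝ᵥ u) * (star u ⬝ᵥ w i)
      = ∑ m, ∑ n, (u m * star (u n)) * (star (w i m) * w i n) := by
    intro i
    simp only [dotProduct, Pi.star_apply, Finset.sum_mul_sum]
    exact Finset.sum_congr rfl fun m _ => Finset.sum_congr rfl fun n _ => by ring
  calc ∑ i, (star (w i) ⬝ᵥ u) * (star u ⬝ᵥ w i)
      = ∑ m, ∑ n, (u m * star (u n)) * (∑ i, star (w i m) * w i n) := by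
        simp only [step]
        rw [Finset.sum_comm]
        refine Finset.sum_congr rfl fun m _ => ?_
        rw [Finset.sum_comm]
        exact Finset.sum_congr rfl fun n _ => (Finset.mul_sum _ _ _).symm
    _ = ∑ m, u m * star (u m) := by
        simp only [complete' w hw, mul_ite, mul_one, mul_zero]
        simp
    _ = 1 := by
        rw [← hu]
        simp only [dotProduct, Pi.star_apply]
        exact Finset.sum_congr rfl fun m _ => mul_comm _ _

lemma tr2lemma {d : ℕ} (a b u1 u2 : Fin d → ℂ) :
    Matrix.trace ((vecMulVec a (star b))ᴴ * vecMulVec u1 (star u1) * vecMulVec a (star b) *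
        vecMulVec u2 (star u2))
      = ((star a ⬝ᵥ u1) * (star u1 ⬝ᵥ a)) * ((star b ⬝ᵥ u2) * (star u2 ⬝ᵥ b)) := by
  rw [vmv_conjT']
  simp only [vmv_mul', smul_mul_assoc, smul_smul, Matrix.trace_smul, vmv_trace', smul_eq_mul]
  ring

lemma tr1lemma {d : ℕ} (a b u : Fin d → ℂ) (ha : star a ⬝ᵥ a = 1) (hb : star b ⬝ᵥ b = 1) :
    Matrix.trace (vecMulVec u (star u) * ((vecMulVec a (star b))ᴴ * vecMulVec a (star b) +
        vecMulVec a (star b) * (vecMulVec a (star b))ᴴ))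
      = ((star b ⬝ᵥ u) * (star u ⬝ᵥ b) + (star a ⬝ᵥ u) * (star u ⬝ᵥ a)) := by
  rw [vmv_conjT']
  simp only [vmv_mul', ha, hb, one_smul, Matrix.mul_add, vmv_mul', smul_mul_assoc, smul_smul,
    Matrix.trace_add, Matrix.trace_smul, vmv_trace', smul_eq_mul]
  ring



open Matrix in
/-- Complementarity identity: for a density matrix `ρ = Σ_k p_k |ψ_k⟩⟨ψ_k|`,
matrix units `E_{ij} = |i⟩⟨j|` built from an orthonormal basis `{|i⟩}`, and a
symmetric function `c̃` with `c̃(x,x) = x`, the metric-adjusted skew information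
`I(A) = (1/2)Tr[ρ(A†A+AA†)] − Σ_{k,l} c̃(p_k,p_l) Tr[A†|ψ_k⟩⟨ψ_k|A|ψ_l⟩⟨ψ_l|]`
satisfies `Σ_{i,j} I(E_{ij}) = d − Σ_{k,l} c̃(p_k,p_l)`. -/
theorem stmt9 (d : ℕ) (p : Fin d → ℝ) (v w : Fin d → Fin d → ℂ)
    (ctil : ℝ → ℝ → ℝ)
    (hv : ∀ k l, star (v k) ⬝ᵥ v l = if k = l then 1 else 0)
    (hw : ∀ i j, star (w i) ⬝ᵥ w j = if i = j then 1 else 0)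
    (hp : ∀ k, 0 ≤ p k) (hsum : ∑ k, p k = 1)
    (hsymm : ∀ x y, ctil x y = ctil y x) (hdiag : ∀ x, ctil x x = x)
    (ρ : Matrix (Fin d) (Fin d) ℂ)
    (hρ : ρ = ∑ k, (p k : ℂ) • vecMulVec (v k) (star (v k)))
    (E : Fin d → Fin d → Matrix (Fin d) (Fin d) ℂ)
    (hE : ∀ i j, E i j = vecMulVec (w i) (star (w j)))
    (I : Matrix (Fin d) (Fin d) ℂ → ℝ)
    (hI : ∀ A, I A = (1 / 2) * (Matrix.trace (ρ * (Aᴴ * A + A * Aᴴ))).re -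
      ∑ k, ∑ l, ctil (p k) (p l) *
        (Matrix.trace (Aᴴ * vecMulVec (v k) (star (v k)) * A *
          vecMulVec (v l) (star (v l)))).re) :
    ∑ i, ∑ j, I (E i j) = d - ∑ k, ∑ l, ctil (p k) (p l) := by
  set f : Fin d → Fin d → ℂ :=
    fun i k => (star (w i) ⬝ᵥ v k) * (star (v k) ⬝ᵥ w i) with hfdef
  have hvkk : ∀ k, star (v k) ⬝ᵥ v k = 1 := by intro k; simpa using hv k k
  have hwii : ∀ i, star (w i) ⬝ᵥ w i = 1 := by intro i; simpa using hw i i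
  have hf : ∀ k, ∑ i, f i k = 1 := fun k => fsum' w (v k) hw (hvkk k)
  have tr1 : ∀ i j, Matrix.trace (ρ * ((E i j)ᴴ * E i j + E i j * (E i j)ᴴ))
      = ∑ k, (p k : ℂ) * (f j k + f i k) := by
    intro i j
    rw [hρ, hE, Matrix.sum_mul, Matrix.trace_sum]
    refine Finset.sum_congr rfl fun k _ => ?_
    rw [smul_mul_assoc, Matrix.trace_smul,
      tr1lemma (w i) (w j) (v k) (hwii i) (hwii j), smul_eq_mul]
  have tr2 : ∀ i j k l, Matrix.trace ((E i j)ᴴ * vecMulVec (v k) (star (v k)) * E i j *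
      vecMulVec (v l) (star (v l))) = f i k * f j l := by
    intro i j k l
    rw [hE, tr2lemma]
  have key : ∀ i j, I (E i j)
      = ((1 / 2 : ℂ) * (∑ k, (p k : ℂ) * (f j k + f i k))
          - ∑ k, ∑ l, ((ctil (p k) (p l) : ℝ) : ℂ) * (f i k * f j l)).re := by
    intro i j
    have hhalf : ∀ z : ℂ, ((1 / 2 : ℂ) * z).re = 1 / 2 * z.re := by
      intro z
      rw [show (1 / 2 : ℂ) = ((1 / 2 : ℝ) : ℂ) by norm_num, Complex.re_ofReal_mul]
    have hpush : ∀ (c : Fin d → Fin d → ℝ) (g : Fin d → Fin d → ℂ),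
        (∑ k, ∑ l, ((c k l : ℝ) : ℂ) * g k l).re = ∑ k, ∑ l, c k l * (g k l).re := by
      intro c g
      rw [Complex.re_sum]
      exact Finset.sum_congr rfl fun k _ => by
        rw [Complex.re_sum]
        exact Finset.sum_congr rfl fun l _ => Complex.re_ofReal_mul _ _
    rw [hI]
    simp only [tr1, tr2]
    rw [Complex.sub_re, hhalf, hpush (fun k l => ctil (p k) (p l)) (fun k l => f i k * f j l)]
  simp only [key]
  have flip : ∀ (g : Fin d → Fin d → ℂ), ∑ i, ∑ j, (g i j).re = (∑ i, ∑ j, g i j).re := by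
    intro g
    rw [Complex.re_sum]
    exact Finset.sum_congr rfl fun i _ => (Complex.re_sum _ _).symm
  rw [flip]
  have hS : ∑ j, ∑ k, (p k : ℂ) * f j k = 1 := by
    rw [Finset.sum_comm]
    rw [Finset.sum_congr rfl fun k _ => by rw [← Finset.mul_sum, hf k, mul_one]]
    exact_mod_cast hsum
  have hS2 : ∑ j, (1 / 2 : ℂ) * (∑ k, (p k : ℂ) * f j k) = 1 / 2 := by
    rw [← Finset.mul_sum, hS, mul_one]
  have hA : ∑ i, ∑ j, (1 / 2 : ℂ) * (∑ k, (p k : ℂ) * (f j k + f i k)) = (d : ℂ) := by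
    have expand : ∀ (i j : Fin d), (1 / 2 : ℂ) * (∑ k, (p k : ℂ) * (f j k + f i k))
        = (1 / 2 : ℂ) * (∑ k, (p k : ℂ) * f j k) + (1 / 2 : ℂ) * (∑ k, (p k : ℂ) * f i k) := by
      intro i j
      rw [← mul_add, ← Finset.sum_add_distrib]
      congr 1
      exact Finset.sum_congr rfl fun k _ => by ring
    simp only [expand, Finset.sum_add_distrib, hS2, Finset.sum_const, Finset.card_univ,
      Fintype.card_fin, nsmul_eq_mul, ← Finset.mul_sum]
    ring
  have hB : ∑ i, ∑ j, ∑ k, ∑ l, ((ctil (p k) (p l) : ℝ) : ℂ) * (f i k * f j l)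
      = ∑ k, ∑ l, ((ctil (p k) (p l) : ℝ) : ℂ) := by
    have h1 : ∀ i, ∑ j, ∑ k, ∑ l, ((ctil (p k) (p l) : ℝ) : ℂ) * (f i k * f j l)
        = ∑ k, ∑ l, ((ctil (p k) (p l) : ℝ) : ℂ) * f i k := by
      intro i
      rw [Finset.sum_comm]
      refine Finset.sum_congr rfl fun k _ => ?_
      rw [Finset.sum_comm]
      refine Finset.sum_congr rfl fun l _ => ?_
      calc ∑ j, ((ctil (p k) (p l) : ℝ) : ℂ) * (f i k * f j l)
          = ((ctil (p k) (p l) : ℝ) : ℂ) * f i k * ∑ j, f j l := by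
            rw [Finset.mul_sum]; exact Finset.sum_congr rfl fun j _ => by ring
        _ = ((ctil (p k) (p l) : ℝ) : ℂ) * f i k := by rw [hf l, mul_one]
    simp only [h1]
    rw [Finset.sum_comm]
    refine Finset.sum_congr rfl fun k _ => ?_
    rw [Finset.sum_comm]
    refine Finset.sum_congr rfl fun l _ => ?_
    rw [← Finset.mul_sum, hf k, mul_one]
  have hZ : (∑ i, ∑ j, ((1 / 2 : ℂ) * (∑ k, (p k : ℂ) * (f j k + f i k))
      - ∑ k, ∑ l, ((ctil (p k) (p l) : ℝ) : ℂ) * (f i k * f j l)))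
      = (d : ℂ) - ∑ k, ∑ l, ((ctil (p k) (p l) : ℝ) : ℂ) := by
    simp only [Finset.sum_sub_distrib]
    rw [hA, hB]
  rw [hZ]
  simp [Complex.sub_re, Complex.re_sum]
end

section
/- Defining the quantum f-entropy S_f(ρ) := Σ_{k,l} c̃(p_k,p_l) − 1 (where p_k are the eigenvalues of the density matrix ρ), the exact complementarity relation W^c(ρ)+P^c(ρ)+S_f(ρ) = d−1 holds. -/
/-!
Relative to the orthonormal basis `w`, `E i jᴴ * E i j` and `E i j * E i jᴴ` are the projections
onto `w j` and `w i`, so by completeness the first terms of the `I (E i j)` add up to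
`d * trace ρ = d`. With `P k` the projection onto `v k`, the skew terms factor as
`trace (E i jᴴ * P k * E i j * P l) = ⟪w i, P k w i⟫ * ⟪w j, P l w j⟫`, and summing over `i` and `j`
gives `trace (P k) * trace (P l) = 1`. Hence the `I (E i j)` add up to `d - ∑ k, ∑ l, c̃ (p k) (p l)`.
-/

open Matrix

namespace Matrix

section Semiring

variable {n R : Type*} [Fintype n] [CommSemiring R]

theorem trace_vecMulVec_mul_mul_vecMulVec_mul (a b x y : n → R) (A B : Matrix n n R) :
    trace (vecMulVec b x * A * vecMulVec a y * B) = (x ⬝ᵥ A *ᵥ a) * (y ⬝ᵥ B *ᵥ b) := by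
  rw [vecMulVec_mul, vecMulVec_mul, vecMulVec_mul, trace_vecMulVec, vecMul_vecMulVec,
    smul_vecMul, dotProduct_smul, dotProduct_mulVec, dotProduct_mulVec, dotProduct_comm b,
    smul_eq_mul, mul_comm]

end Semiring

variable {n R : Type*} [Fintype n] [CommRing R] [StarRing R]

theorem conjTranspose_vecMulVec_mul_self {a : n → R} (b : n → R) (ha : star a ⬝ᵥ a = 1) :
    (vecMulVec a (star b))ᴴ * vecMulVec a (star b) = vecMulVec b (star b) := by
  rw [conjTranspose_vecMulVec, star_star, vecMulVec_mul_vecMulVec, ha, one_smul]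

theorem vecMulVec_mul_conjTranspose_self (a : n → R) {b : n → R} (hb : star b ⬝ᵥ b = 1) :
    vecMulVec a (star b) * (vecMulVec a (star b))ᴴ = vecMulVec a (star a) := by
  rw [conjTranspose_vecMulVec, star_star, vecMulVec_mul_vecMulVec, hb, one_smul]

variable [DecidableEq n]

theorem sum_vecMulVec_star_eq_one {u : n → n → R}
    (hu : ∀ k l, star (u k) ⬝ᵥ u l = if k = l then 1 else 0) :
    ∑ i, vecMulVec (u i) (star (u i)) = 1 := by
  set B : Matrix n n R := (of u)ᵀ
  have hBB : Bᴴ * B = 1 := by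
    ext k l
    simpa [B, mul_apply, dotProduct, one_apply] using hu k l
  have hBB' : B * Bᴴ = 1 := mul_eq_one_comm.mp hBB
  ext a b
  simpa [B, mul_apply, vecMulVec_apply, Matrix.sum_apply] using congr_fun₂ hBB' a b

theorem sum_star_dotProduct_mulVec_eq_trace {u : n → n → R}
    (hu : ∀ k l, star (u k) ⬝ᵥ u l = if k = l then 1 else 0) (A : Matrix n n R) :
    ∑ i, star (u i) ⬝ᵥ A *ᵥ u i = trace A := by
  conv_rhs => rw [← A.mul_one, ← sum_vecMulVec_star_eq_one hu]
  simp [Finset.mul_sum, trace_sum, mul_vecMulVec, dotProduct_comm]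

theorem sum_sum_trace_mul_conjTranspose_mul_self_add {u : n → n → R}
    (hu : ∀ k l, star (u k) ⬝ᵥ u l = if k = l then 1 else 0) (ρ : Matrix n n R) :
    ∑ i, ∑ j, trace (ρ * ((vecMulVec (u i) (star (u j)))ᴴ * vecMulVec (u i) (star (u j)) +
      vecMulVec (u i) (star (u j)) * (vecMulVec (u i) (star (u j)))ᴴ)) =
      2 * Fintype.card n * trace ρ := by
  have hnorm (i : n) : star (u i) ⬝ᵥ u i = 1 := by simpa using hu i i
  have hsum_proj : ∑ i, trace (ρ * vecMulVec (u i) (star (u i))) = trace ρ := by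
    rw [← trace_sum, ← Finset.mul_sum, sum_vecMulVec_star_eq_one hu, mul_one]
  simp only [conjTranspose_vecMulVec_mul_self _ (hnorm _),
    vecMulVec_mul_conjTranspose_self _ (hnorm _), Matrix.mul_add, trace_add,
    Finset.sum_add_distrib, hsum_proj, Finset.sum_const, ← Finset.mul_sum, Finset.card_univ,
    nsmul_eq_mul]
  ring

theorem sum_sum_trace_conjTranspose_mul_mul_mul {u : n → n → R}
    (hu : ∀ k l, star (u k) ⬝ᵥ u l = if k = l then 1 else 0) (A B : Matrix n n R) :
    ∑ i, ∑ j, trace ((vecMulVec (u i) (star (u j)))ᴴ * A * vecMulVec (u i) (star (u j)) * B) =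
      trace A * trace B := by
  simp only [conjTranspose_vecMulVec, star_star, trace_vecMulVec_mul_mul_vecMulVec_mul,
    ← Finset.sum_mul_sum, sum_star_dotProduct_mulVec_eq_trace hu]

end Matrix

theorem Finset.sum_diag_add_sum_ite_ne {n M : Type*} [Fintype n] [DecidableEq n] [AddCommMonoid M]
    (f : n → n → M) :
    ∑ i, f i i + ∑ i, ∑ j, (if i ≠ j then f i j else 0) = ∑ i, ∑ j, f i j := by
  rw [← Finset.sum_add_distrib]
  refine Finset.sum_congr rfl fun i _ => ?_
  rw [Finset.sum_ite, Finset.sum_const_zero, add_zero, Finset.filter_ne,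
    Finset.add_sum_erase _ _ (Finset.mem_univ i)]

theorem Finset.sum_sum_sum_sum_comm {ι κ M : Type*} [Fintype ι] [Fintype κ] [AddCommMonoid M]
    (f : ι → ι → κ → κ → M) :
    ∑ i, ∑ j, ∑ k, ∑ l, f i j k l = ∑ k, ∑ l, ∑ i, ∑ j, f i j k l :=
  calc ∑ i, ∑ j, ∑ k, ∑ l, f i j k l = ∑ i, ∑ k, ∑ l, ∑ j, f i j k l :=
        Finset.sum_congr rfl fun _ _ => by
          rw [Finset.sum_comm]; exact Finset.sum_congr rfl fun _ _ => Finset.sum_comm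
    _ = ∑ k, ∑ l, ∑ i, ∑ j, f i j k l := by
        rw [Finset.sum_comm]; exact Finset.sum_congr rfl fun _ _ => Finset.sum_comm

open Matrix in
theorem stmt11_general (d : ℕ) (p : Fin d → ℝ) (v w : Fin d → Fin d → ℂ)
    (ctil : ℝ → ℝ → ℝ)
    (hv : ∀ k l, star (v k) ⬝ᵥ v l = if k = l then 1 else 0)
    (hw : ∀ i j, star (w i) ⬝ᵥ w j = if i = j then 1 else 0)
    (hsum : ∑ k, p k = 1)
    (ρ : Matrix (Fin d) (Fin d) ℂ)
    (hρ : ρ = ∑ k, (p k : ℂ) • vecMulVec (v k) (star (v k)))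
    (E : Fin d → Fin d → Matrix (Fin d) (Fin d) ℂ)
    (hE : ∀ i j, E i j = vecMulVec (w i) (star (w j)))
    (I : Matrix (Fin d) (Fin d) ℂ → ℝ)
    (hI : ∀ A, I A = (1 / 2) * (Matrix.trace (ρ * (Aᴴ * A + A * Aᴴ))).re -
      ∑ k, ∑ l, ctil (p k) (p l) *
        (Matrix.trace (Aᴴ * vecMulVec (v k) (star (v k)) * A *
          vecMulVec (v l) (star (v l)))).re)
    (Sf : ℝ) (hSf : Sf = (∑ k, ∑ l, ctil (p k) (p l)) - 1) :
    (∑ i, I (E i i)) + (∑ i, ∑ j, if i ≠ j then I (E i j) else 0) + Sf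
      = (d : ℝ) - 1 := by
  have htrace_proj (k : Fin d) : trace (vecMulVec (v k) (star (v k))) = 1 := by
    simpa [dotProduct_comm (v k)] using hv k k
  have htrace_ρ : trace ρ = 1 := by
    simp only [hρ, trace_sum, trace_smul, htrace_proj, smul_eq_mul, mul_one]
    exact_mod_cast hsum
  have hsum_I : ∑ i, ∑ j, I (E i j) =
      (1 / 2) * (∑ i, ∑ j, trace (ρ * ((E i j)ᴴ * E i j + E i j * (E i j)ᴴ))).re -
      ∑ k, ∑ l, ctil (p k) (p l) * (∑ i, ∑ j, trace ((E i j)ᴴ * vecMulVec (v k) (star (v k)) *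
        E i j * vecMulVec (v l) (star (v l)))).re := by
    simp only [hI, Complex.re_sum, Finset.sum_sub_distrib, Finset.mul_sum]
    rw [Finset.sum_sum_sum_sum_comm]
  rw [Finset.sum_diag_add_sum_ite_ne (fun i j => I (E i j)), hsum_I, hSf]
  simp only [hE, sum_sum_trace_mul_conjTranspose_mul_self_add hw,
    sum_sum_trace_conjTranspose_mul_mul_mul hw, htrace_proj, htrace_ρ, Fintype.card_fin]
  simp

open Matrix in
/-- Defining the quantum `f`-entropy `S_f(ρ) = Σ_{k,l} c̃(p_k,p_l) − 1`, the exact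
complementarity relation `W^c(ρ) + P^c(ρ) + S_f(ρ) = d − 1` holds, where
`W^c(ρ) = Σ_i I(E_{ii})` and `P^c(ρ) = Σ_{i≠j} I(E_{ij})` are the wave and
particle features defined via the metric-adjusted skew information `I`. -/
theorem stmt11 (d : ℕ) (p : Fin d → ℝ) (v w : Fin d → Fin d → ℂ)
    (ctil : ℝ → ℝ → ℝ)
    (hv : ∀ k l, star (v k) ⬝ᵥ v l = if k = l then 1 else 0)
    (hw : ∀ i j, star (w i) ⬝ᵥ w j = if i = j then 1 else 0)
    (hp : ∀ k, 0 ≤ p k) (hsum : ∑ k, p k = 1)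
    (hsymm : ∀ x y, ctil x y = ctil y x) (hdiag : ∀ x, ctil x x = x)
    (ρ : Matrix (Fin d) (Fin d) ℂ)
    (hρ : ρ = ∑ k, (p k : ℂ) • vecMulVec (v k) (star (v k)))
    (E : Fin d → Fin d → Matrix (Fin d) (Fin d) ℂ)
    (hE : ∀ i j, E i j = vecMulVec (w i) (star (w j)))
    (I : Matrix (Fin d) (Fin d) ℂ → ℝ)
    (hI : ∀ A, I A = (1 / 2) * (Matrix.trace (ρ * (Aᴴ * A + A * Aᴴ))).re -
      ∑ k, ∑ l, ctil (p k) (p l) *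
        (Matrix.trace (Aᴴ * vecMulVec (v k) (star (v k)) * A *
          vecMulVec (v l) (star (v l)))).re)
    (Sf : ℝ) (hSf : Sf = (∑ k, ∑ l, ctil (p k) (p l)) - 1) :
    (∑ i, I (E i i)) + (∑ i, ∑ j, if i ≠ j then I (E i j) else 0) + Sf
      = (d : ℝ) - 1 :=
  stmt11_general d p v w ctil hv hw hsum ρ hρ E hE I hI Sf hSf
end

section
/- Let {|b_{ti}⟩ : i=1,…,d}, t=1,…,d+1, be a complete family of d+1 mutually unbiased orthonormal bases of ℂ^d, i.e., each {|b_{ti}⟩}_i is an orthonormal basis and |⟨b_{ti}|b_{sj}⟩|² = 1/d whenever t≠s. Then Σ_{t=1}^{d+1} Σ_{i=1}^{d} |b_{ti}⟩⟨b_{ti}| ⊗ |b_{ti}⟩⟨b_{ti}| = 1⊗1 + F, where F is the swap operator on ℂ^d⊗ℂ^d and 1 is the identity on ℂ^d. -/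
/-!
Let `A = ∑ P ⊗ P`, the sum running over the `d (d + 1)` rank-one projectors `P = |b⟩⟨b|` of the
bases, and `B = 1 + F`. Both are Hermitian, so `A = B` as soon as the Hilbert–Schmidt norm
`tr (A - B)² = tr A² - 2 tr AB + tr B²` vanishes. Now `tr AB = ∑ (tr P)² + ∑ tr P² = 2 d (d + 1)`
because `tr ((X ⊗ Y) F) = tr (XY)`, and `tr B² = 2 d (d + 1)` because `F² = 1` and `tr F = d`.
Finally `tr A² = ∑ |⟨b, b'⟩|⁴` is the frame potential of the vectors, and mutual unbiasedness
makes each row of it equal to `1 + d · d · d⁻² = 2`, so `tr A² = 2 d (d + 1)` as well.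
-/

open Matrix Kronecker

namespace Matrix

section Swap

variable (n R : Type*) [DecidableEq n]

def swapMatrix [Zero R] [One R] : Matrix (n × n) (n × n) R :=
  Equiv.Perm.permMatrix R (Equiv.prodComm n n)

variable {n R}

lemma swapMatrix_mulVec [Fintype n] [CommRing R] (ψ φ : n → R) :
    swapMatrix n R *ᵥ (fun q => ψ q.1 * φ q.2) = fun q => φ q.1 * ψ q.2 := by
  rw [swapMatrix, permMatrix_mulVec]
  ext q
  exact mul_comm _ _

lemma eq_swapMatrix_of_mulVec [Fintype n] [CommRing R] {F : Matrix (n × n) (n × n) R}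
    (hF : ∀ ψ φ : n → R, F *ᵥ (fun q => ψ q.1 * φ q.2) = fun q => φ q.1 * ψ q.2) :
    F = swapMatrix n R := by
  refine ext_of_mulVec_single fun q => ?_
  have hsingle : (Pi.single q (1 : R) : n × n → R) =
      fun r => (Pi.single q.1 (1 : R) : n → R) r.1 * (Pi.single q.2 (1 : R) : n → R) r.2 := by
    ext r
    simp only [Pi.single_apply, ite_zero_mul_ite_zero, Prod.ext_iff, mul_one]
  rw [hsingle, hF, swapMatrix_mulVec]

lemma swapMatrix_mul_self [Fintype n] [NonAssocSemiring R] :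
    swapMatrix n R * swapMatrix n R = 1 := by
  rw [swapMatrix, ← permMatrix_mul]
  convert permMatrix_one
  ext q <;> rfl

lemma isHermitian_swapMatrix [NonAssocSemiring R] [StarRing R] :
    (swapMatrix n R).IsHermitian := by
  rw [IsHermitian, swapMatrix, conjTranspose_permMatrix]
  rfl

lemma trace_kronecker_mul_swapMatrix [Fintype n] [CommSemiring R] (X Y : Matrix n n R) :
    trace ((X ⊗ₖ Y) * swapMatrix n R) = trace (X * Y) := by
  rw [swapMatrix, PEquiv.mul_toMatrix_toPEquiv]
  simp [trace, mul_apply, Fintype.sum_prod_type]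

lemma trace_swapMatrix [Fintype n] [CommSemiring R] :
    trace (swapMatrix n R) = Fintype.card n := by
  simpa using trace_kronecker_mul_swapMatrix (1 : Matrix n n R) 1

end Swap

lemma IsHermitian.eq_of_trace_mul_eq {n R : Type*} [Fintype n] [PartialOrder R] [CommRing R]
    [StarRing R] [StarOrderedRing R] [NoZeroDivisors R] {A B : Matrix n n R}
    (hA : A.IsHermitian) (hB : B.IsHermitian) (hAA : trace (A * A) = trace (A * B))
    (hBB : trace (B * B) = trace (A * B)) : A = B := by
  rw [← sub_eq_zero, ← trace_conjTranspose_mul_self_eq_zero_iff, conjTranspose_sub, hA.eq,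
    hB.eq, sub_mul, mul_sub, mul_sub, trace_sub, trace_sub, trace_sub, trace_mul_comm B A, hAA,
    hBB]
  abel

section TwoDesign

open scoped ComplexOrder

variable {𝕜 n : Type*} [RCLike 𝕜] [Fintype n]

def framePotential {ι : Type*} [Fintype ι] (v : ι → n → 𝕜) : ℝ :=
  ∑ k, ∑ l, ‖star (v k) ⬝ᵥ v l‖ ^ 4

lemma trace_vecMulVec_star_mul_vecMulVec_star (u w : n → 𝕜) :
    trace (vecMulVec u (star u) * vecMulVec w (star w)) = ((‖star u ⬝ᵥ w‖ ^ 2 : ℝ) : 𝕜) := by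
  rw [vecMulVec_mul_vecMulVec, trace_vecMulVec, dotProduct_smul, smul_eq_mul, dotProduct_star,
    dotProduct_comm w, RCLike.star_def, RCLike.mul_conj]
  push_cast
  rfl

theorem sum_kronecker_vecMulVec_star_eq_one_add_swapMatrix [DecidableEq n] {ι : Type*}
    [Fintype ι] (v : ι → n → 𝕜) (hv : ∀ k, star (v k) ⬝ᵥ v k = 1)
    (hcard : Fintype.card ι = Fintype.card n * (Fintype.card n + 1))
    (hpot : framePotential v = 2 * Fintype.card ι) :
    ∑ k, vecMulVec (v k) (star (v k)) ⊗ₖ vecMulVec (v k) (star (v k)) = 1 + swapMatrix n 𝕜 := by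
  set P := fun k => vecMulVec (v k) (star (v k)) with hP_def
  set A := ∑ k, P k ⊗ₖ P k with hA_def
  set B := 1 + swapMatrix n 𝕜 with hB_def
  have hP : ∀ k l, trace (P k * P l) = ((‖star (v k) ⬝ᵥ v l‖ ^ 2 : ℝ) : 𝕜) := fun k l =>
    trace_vecMulVec_star_mul_vecMulVec_star (v k) (v l)
  have htrace : ∀ k, trace (P k) = 1 := fun k => by
    rw [hP_def, trace_vecMulVec, dotProduct_comm, hv]
  have htrace_sq : ∀ k, trace (P k * P k) = 1 := fun k => by
    rw [hP, hv]
    simp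
  have hA : A.IsHermitian := by
    simp [IsHermitian, hA_def, hP_def, conjTranspose_sum, conjTranspose_kronecker,
      conjTranspose_vecMulVec]
  have hB : B.IsHermitian := isHermitian_one.add isHermitian_swapMatrix
  have hAA : trace (A * A) = (2 * Fintype.card ι : 𝕜) := by
    simp only [hA_def, Finset.sum_mul, Finset.mul_sum, trace_sum, ← mul_kronecker_mul,
      trace_kronecker, hP, ← RCLike.ofReal_mul, ← pow_add, Nat.reduceAdd]
    rw [Finset.sum_comm]
    exact_mod_cast hpot
  have hAB : trace (A * B) = (2 * Fintype.card ι : 𝕜) := by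
    simp only [hA_def, hB_def, mul_add, mul_one, trace_add, Finset.sum_mul, trace_sum,
      trace_kronecker, htrace, trace_kronecker_mul_swapMatrix, htrace_sq, Finset.sum_const,
      Finset.card_univ, nsmul_eq_mul]
    ring
  have hBB : trace (B * B) = (2 * Fintype.card ι : 𝕜) := by
    simp only [hB_def, mul_add, add_mul, mul_one, one_mul, swapMatrix_mul_self, trace_add,
      trace_one, trace_swapMatrix, hcard, Fintype.card_prod]
    push_cast
    ring
  exact hA.eq_of_trace_mul_eq hB (hAA.trans hAB.symm) (hBB.trans hAB.symm)

end TwoDesign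

section MutuallyUnbiased

variable {𝕜 τ n : Type*} [RCLike 𝕜] [Fintype τ] [DecidableEq τ] [Fintype n] [DecidableEq n]

lemma sum_norm_dotProduct_pow_four_of_mutuallyUnbiased (b : τ → n → n → 𝕜)
    (hob : ∀ t i j, star (b t i) ⬝ᵥ b t j = if i = j then 1 else 0)
    (hmub : ∀ t s, t ≠ s → ∀ i j, ‖star (b t i) ⬝ᵥ b s j‖ ^ 2 = 1 / Fintype.card n)
    (t : τ) (i : n) :
    ∑ s, ∑ j, ‖star (b t i) ⬝ᵥ b s j‖ ^ 4 = 1 + ((Fintype.card τ : ℝ) - 1) / Fintype.card n := by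
  have hn : (Fintype.card n : ℝ) ≠ 0 := Nat.cast_ne_zero.mpr (Fintype.card_pos_iff.mpr ⟨i⟩).ne'
  have hsame : ∑ j, ‖star (b t i) ⬝ᵥ b t j‖ ^ 4 = 1 := by
    simp [hob, apply_ite (fun z : 𝕜 => ‖z‖ ^ 4)]
  have hother : ∀ s ∈ Finset.univ.erase t,
      ∑ j, ‖star (b t i) ⬝ᵥ b s j‖ ^ 4 = 1 / Fintype.card n := by
    intro s hs
    simp_rw [show 4 = 2 * 2 from rfl, pow_mul, hmub t s (Finset.ne_of_mem_erase hs).symm]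
    rw [Finset.sum_const, Finset.card_univ, nsmul_eq_mul]
    field_simp
  rw [← Finset.add_sum_erase _ _ (Finset.mem_univ t), hsame, Finset.sum_congr rfl hother,
    Finset.sum_const, Finset.card_erase_of_mem (Finset.mem_univ _), Finset.card_univ,
    nsmul_eq_mul, Nat.cast_sub (Fintype.card_pos_iff.mpr ⟨t⟩)]
  ring

lemma framePotential_of_mutuallyUnbiased (b : τ → n → n → 𝕜)
    (hob : ∀ t i j, star (b t i) ⬝ᵥ b t j = if i = j then 1 else 0)
    (hmub : ∀ t s, t ≠ s → ∀ i j, ‖star (b t i) ⬝ᵥ b s j‖ ^ 2 = 1 / Fintype.card n)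
    (hτ : Fintype.card τ = Fintype.card n + 1) :
    framePotential (fun k : τ × n => b k.1 k.2) = 2 * Fintype.card (τ × n) := by
  have hrow : ∀ t i, ∑ s, ∑ j, ‖star (b t i) ⬝ᵥ b s j‖ ^ 4 = 2 := fun t i => by
    have hn : (Fintype.card n : ℝ) ≠ 0 := Nat.cast_ne_zero.mpr (Fintype.card_pos_iff.mpr ⟨i⟩).ne'
    rw [sum_norm_dotProduct_pow_four_of_mutuallyUnbiased b hob hmub t i, hτ, Nat.cast_succ,
      add_sub_cancel_right, div_self hn]
    norm_num
  simp only [framePotential, Fintype.sum_prod_type, hrow, Finset.sum_const, Finset.card_univ,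
    Fintype.card_prod, nsmul_eq_mul, Nat.cast_mul]
  ring

end MutuallyUnbiased

end Matrix

open Matrix Kronecker in
theorem stmt13_general (d : ℕ)
    (b : Fin (d + 1) → Fin d → Fin d → ℂ)
    (hob : ∀ t i j, star (b t i) ⬝ᵥ b t j = if i = j then 1 else 0)
    (hmub : ∀ t s, t ≠ s → ∀ i j, ‖star (b t i) ⬝ᵥ b s j‖ ^ 2 = 1 / d)
    (F : Matrix (Fin d × Fin d) (Fin d × Fin d) ℂ)
    (hF : ∀ ψ φ : Fin d → ℂ,
      F.mulVec (fun q => ψ q.1 * φ q.2) = fun q => φ q.1 * ψ q.2) :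
    ∑ t, ∑ i, (vecMulVec (b t i) (star (b t i)) ⊗ₖ vecMulVec (b t i) (star (b t i)))
      = 1 + F := by
  obtain rfl := eq_swapMatrix_of_mulVec hF
  convert sum_kronecker_vecMulVec_star_eq_one_add_swapMatrix
    (fun k : Fin (d + 1) × Fin d => b k.1 k.2) (fun k => ?_) ?_
    (framePotential_of_mutuallyUnbiased b hob (by simpa using hmub) (by simp)) using 1
  · exact (Fintype.sum_prod_type' _).symm
  · simpa using hob k.1 k.2 k.2
  · rw [Fintype.card_prod, Fintype.card_fin, Fintype.card_fin, mul_comm]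

open Matrix Kronecker in
/-- For a complete family of `d+1` mutually unbiased orthonormal bases
`{|b_{ti}⟩}` of `ℂ^d`,
`Σ_{t=1}^{d+1} Σ_{i=1}^{d} |b_{ti}⟩⟨b_{ti}| ⊗ |b_{ti}⟩⟨b_{ti}| = 1⊗1 + F`,
where `F` is the swap operator on `ℂ^d ⊗ ℂ^d`. -/
theorem stmt13 (d : ℕ) (hd : 0 < d)
    (b : Fin (d + 1) → Fin d → Fin d → ℂ)
    (hob : ∀ t i j, star (b t i) ⬝ᵥ b t j = if i = j then 1 else 0)
    (hmub : ∀ t s, t ≠ s → ∀ i j, ‖star (b t i) ⬝ᵥ b s j‖ ^ 2 = 1 / d)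
    (F : Matrix (Fin d × Fin d) (Fin d × Fin d) ℂ)
    (hF : ∀ ψ φ : Fin d → ℂ,
      F.mulVec (fun q => ψ q.1 * φ q.2) = fun q => φ q.1 * ψ q.2) :
    ∑ t, ∑ i, (vecMulVec (b t i) (star (b t i)) ⊗ₖ vecMulVec (b t i) (star (b t i)))
      = 1 + F :=
  stmt13_general d b hob hmub F hF
end
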